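/- arXiv:2209.08407 — 2 statements merged into one kernel-verified Lean document; each statement's English description precedes it below -/
import Mathlib

section
/- Let c : ℝ^d × ℝ^d → [0,∞] be a nonnegative lower semicontinuous cost, and suppose W² : P(ℝ^d)² → [0,∞] is jointly convex and jointly lower semicontinuous with respect to narrow convergence, with W²(δ_x, δ_y) = c(x,y). Then for all probability measures μ, ν on ℝ^d, W²(μ,ν) ≤ inf_{π ∈ Π(μ,ν)} ∫ c(x,y) dπ(x,y), where Π(μ,ν) is the set of couplings of μ and ν. (Disintegration inequality: proved via the strong law of large numbers applied to empirical measures of i.i.d. samples from an arbitrary coupling, combined with joint convexity and lower semicontinuity.) -/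
open MeasureTheory Filter Set
open scoped ENNReal Topology

/-!
Push the coupling `π` forward by simple maps `Tₙ` that converge to the identity in measure:
`Tₙ` collapses each cell of a countable partition of mesh `2/n` to a point where the cost is
within `1/n` of its infimum on the cell, and sends the cells beyond a finite index, of total mass
at most `1/n`, to one point of finite cost. Then `∫ c ∘ Tₙ dπ ≤ ∫ c dπ + O(1/n)`, and joint
convexity bounds `W` of the finitely supported marginals of `Tₙ # π` by exactly that integral.
Convergence in measure gives narrow convergence of these marginals to `μ` and `ν`, and lower
semicontinuity of `W` passes the bound to the limit.
-/

lemma MeasureTheory.SimpleFunc.measure_map_comp_eq_sum_smul_dirac {α β γ : Type*}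
    [MeasurableSpace α] [MeasurableSpace β] [MeasurableSpace γ] (μ : Measure α)
    (f : SimpleFunc α β) {g : β → γ} (hg : Measurable g) :
    μ.map (g ∘ f) = ∑ b ∈ f.range, μ (f ⁻¹' {b}) • Measure.dirac (g b) := by
  classical
  ext S hS
  rw [Measure.map_apply (hg.comp f.measurable) hS, Measure.finsetSum_apply]
  calc μ (g ∘ f ⁻¹' S) = μ (f ⁻¹' ↑(f.range.filter fun b => g b ∈ S)) := by
        congr 1; ext a; simp
    _ = ∑ b ∈ f.range, μ (f ⁻¹' {b}) • Measure.dirac (g b) S := by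
        rw [← f.sum_measure_preimage_singleton, Finset.sum_filter]
        simp [Measure.dirac_apply' _ hS, Set.indicator_apply]

def JointlyConvex {X : Type*} [MeasurableSpace X] (W : Measure X → Measure X → ℝ≥0∞) : Prop :=
  ∀ (a b : ℝ≥0∞) (ρ₀ ρ₀' ρ₁ ρ₁' : Measure X), a + b = 1 →
    W (a • ρ₀ + b • ρ₀') (a • ρ₁ + b • ρ₁') ≤ a * W ρ₀ ρ₁ + b * W ρ₀' ρ₁'

namespace JointlyConvex

variable {X : Type*} [MeasurableSpace X] {W : Measure X → Measure X → ℝ≥0∞}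

lemma finset_sum_le (hW : JointlyConvex W)
    {ι : Type*} (s : Finset ι) (w : ι → ℝ≥0∞) (hw : ∑ i ∈ s, w i = 1) (ρ σ : ι → Measure X) :
    W (∑ i ∈ s, w i • ρ i) (∑ i ∈ s, w i • σ i) ≤ ∑ i ∈ s, w i * W (ρ i) (σ i) := by
  induction s using Finset.cons_induction generalizing w with
  | empty => simp at hw
  | cons i s hi ih =>
    simp only [Finset.sum_cons] at hw ⊢
    set b := ∑ j ∈ s, w j
    have hb_top : b ≠ ⊤ := ne_top_of_le_ne_top ENNReal.one_ne_top (le_add_self.trans hw.le)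
    rcases eq_or_ne b 0 with hb | hb
    · have hw_zero : ∀ j ∈ s, w j = 0 := Finset.sum_eq_zero_iff.1 hb
      have hsum_zero : ∀ τ : ι → Measure X, ∑ j ∈ s, w j • τ j = 0 :=
        fun τ => Finset.sum_eq_zero fun j hj => by simp [hw_zero j hj]
      have hcost_zero : ∑ j ∈ s, w j * W (ρ j) (σ j) = 0 :=
        Finset.sum_eq_zero fun j hj => by simp [hw_zero j hj]
      simp [hsum_zero, hcost_zero, show w i = 1 by simpa [hb] using hw]
    -- split off `w i` and renormalise the remaining weights by `b`
    have hrescale : ∀ τ : ι → Measure X,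
        b • ∑ j ∈ s, (b⁻¹ * w j) • τ j = ∑ j ∈ s, w j • τ j := fun τ => by
      simp only [Finset.smul_sum, smul_smul, ← mul_assoc, ENNReal.mul_inv_cancel hb hb_top,
        one_mul]
    have hmix := hW (w i) b (ρ i) (∑ j ∈ s, (b⁻¹ * w j) • ρ j) (σ i)
      (∑ j ∈ s, (b⁻¹ * w j) • σ j) hw
    rw [hrescale, hrescale] at hmix
    refine hmix.trans (add_le_add_right ?_ _)
    calc b * W (∑ j ∈ s, (b⁻¹ * w j) • ρ j) (∑ j ∈ s, (b⁻¹ * w j) • σ j)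
        ≤ b * ∑ j ∈ s, b⁻¹ * w j * W (ρ j) (σ j) := by
          gcongr
          exact ih _ (by rw [← Finset.mul_sum, ENNReal.inv_mul_cancel hb hb_top])
      _ = ∑ j ∈ s, w j * W (ρ j) (σ j) := by
          simp only [Finset.mul_sum, ← mul_assoc, ENNReal.mul_inv_cancel hb hb_top, one_mul]



lemma map_simpleFunc_le_lintegral (hW : JointlyConvex W)
    {α β : Type*} [MeasurableSpace α] [MeasurableSpace β] (μ : Measure α) [IsProbabilityMeasure μ]
    (f : SimpleFunc α β) {g₁ g₂ : β → X} (hg₁ : Measurable g₁) (hg₂ : Measurable g₂) :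
    W (μ.map (g₁ ∘ f)) (μ.map (g₂ ∘ f)) ≤
      ∫⁻ a, W (Measure.dirac (g₁ (f a))) (Measure.dirac (g₂ (f a))) ∂μ := by
  have hcost := f.map_lintegral (μ := μ) fun b => W (Measure.dirac (g₁ b)) (Measure.dirac (g₂ b))
  rw [← SimpleFunc.lintegral_eq_lintegral, SimpleFunc.coe_map] at hcost
  simp only [Function.comp_apply] at hcost
  rw [f.measure_map_comp_eq_sum_smul_dirac μ hg₁, f.measure_map_comp_eq_sum_smul_dirac μ hg₂,
    hcost]
  simp_rw [mul_comm _ (μ _)]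
  exact hW.finset_sum_le _ _
    (by rw [f.sum_range_measure_preimage_singleton, measure_univ]) _ _

end JointlyConvex

lemma exists_fiber_section_le_add {α ι : Type*} [Nonempty α] (q : α → ι) (h : α → ℝ≥0∞)
    {ε : ℝ≥0∞} (hε : ε ≠ 0) : ∃ s : ι → α, ∀ x, q (s (q x)) = q x ∧ h (s (q x)) ≤ h x + ε := by
  suffices ∀ k, ∃ z, ∀ x, q x = k → q z = k ∧ h z ≤ h x + ε by
    choose s hs using this
    exact ⟨s, fun x => hs (q x) x rfl⟩
  intro k
  by_cases hk : ∃ x, q x = k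
  swap
  · push Not at hk
    exact ⟨Classical.arbitrary α, fun x hx => absurd hx (hk x)⟩
  obtain ⟨x₁, hx₁⟩ := hk
  set m := ⨅ (x) (_ : q x = k), h x
  obtain ⟨z, hzk, hz⟩ : ∃ z, q z = k ∧ h z ≤ m + ε := by
    rcases eq_or_ne m ⊤ with hm | hm
    · exact ⟨x₁, hx₁, by simp [hm]⟩
    · obtain ⟨z, hz⟩ := iInf_lt_iff.1 (ENNReal.lt_add_right hm hε)
      obtain ⟨hzk, hz⟩ := iInf_lt_iff.1 hz
      exact ⟨z, hzk, hz.le⟩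
  exact ⟨z, fun x hx => ⟨hzk, hz.trans (by gcongr; exact iInf₂_le x hx)⟩⟩

lemma exists_measurable_index_edist_lt {E : Type*} [PseudoEMetricSpace E] [MeasurableSpace E]
    [OpensMeasurableSpace E] [TopologicalSpace.SeparableSpace E] [Nonempty E] {ε : ℝ≥0∞}
    (hε : ε ≠ 0) : ∃ (q : E → ℕ) (u : ℕ → E), Measurable q ∧ ∀ x, edist x (u (q x)) < ε := by
  classical
  set u := TopologicalSpace.denseSeq E
  have hcover : ∀ x, ∃ k, edist x (u k) < ε := fun x => by
    obtain ⟨_, ⟨k, rfl⟩, hk⟩ := EMetric.mem_closure_iff.1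
      ((TopologicalSpace.denseRange_denseSeq E).closure_range ▸ mem_univ x) ε hε.bot_lt
    exact ⟨k, hk⟩
  refine ⟨fun x => Nat.find (hcover x), u, measurable_find hcover fun k => ?_,
    fun x => Nat.find_spec (hcover x)⟩
  exact (Metric.isOpen_eball (x := u k) (ε := ε)).measurableSet

lemma exists_measure_tail_le {α : Type*} [MeasurableSpace α] (μ : Measure α) [IsFiniteMeasure μ]
    {q : α → ℕ} (hq : Measurable q) {ε : ℝ≥0∞} (hε : ε ≠ 0) : ∃ M, μ {x | M ≤ q x} ≤ ε := by
  have hlim : Tendsto (fun M => μ {x | M ≤ q x}) atTop (𝓝 0) := by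
    have := tendsto_measure_iInter_atTop (μ := μ) (s := fun M => {x | M ≤ q x})
      (fun M => (hq measurableSet_Ici).nullMeasurableSet)
      (fun M N hMN x hx => le_trans hMN hx) ⟨0, measure_ne_top _ _⟩
    rwa [show (⋂ M, {x | M ≤ q x}) = ∅ from
      eq_empty_of_forall_notMem fun x hx => Nat.not_succ_le_self _ (mem_iInter.1 hx _),
      measure_empty] at this
  exact (hlim.eventually (ge_mem_nhds hε.bot_lt)).exists

section Approximation

variable {E : Type*} [PseudoEMetricSpace E] [MeasurableSpace E] [OpensMeasurableSpace E]
  [TopologicalSpace.SeparableSpace E]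

lemma exists_simpleFunc_measure_edist_le_and_lintegral_le (π : Measure E)
    [IsProbabilityMeasure π] (h : E → ℝ≥0∞) (x₀ : E) {ε : ℝ≥0∞} (hε : ε ≠ 0) :
    ∃ T : SimpleFunc E E, π {x | 2 * ε ≤ edist (T x) x} ≤ ε ∧
      ∫⁻ x, h (T x) ∂π ≤ ∫⁻ x, h x ∂π + ε * (1 + h x₀) := by
  have : Nonempty E := ⟨x₀⟩
  obtain ⟨q, u, hq, hqu⟩ := exists_measurable_index_edist_lt (E := E) hε
  obtain ⟨s, hs⟩ := exists_fiber_section_le_add q h hε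
  obtain ⟨M, hM⟩ := exists_measure_tail_le π hq hε
  set G : ℕ → E := fun k => if k < M then s k else x₀
  have hG : range G ⊆ insert x₀ (s '' Iio M) := by
    rintro _ ⟨k, rfl⟩
    by_cases hk : k < M
    · exact mem_insert_of_mem _ ⟨k, hk, by simp [G, hk]⟩
    · simp [G, hk]
  let T : SimpleFunc E E :=
    ⟨G ∘ q, fun y => hq (MeasurableSet.of_discrete (s := G ⁻¹' {y})),
      ((finite_Iio M).image s |>.insert x₀).subset ((range_comp_subset_range q G).trans hG)⟩
  set B := {x | M ≤ q x}
  have hT_good : ∀ x ∉ B, T x = s (q x) := fun x hx => if_pos (not_le.1 hx)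
  have hT_bad : ∀ x ∈ B, T x = x₀ := fun x hx => if_neg (not_lt.2 hx)
  refine ⟨T, (measure_mono fun x hx => ?_).trans hM, ?_⟩
  · by_contra hxB
    have hclose : edist (s (q x)) x < 2 * ε := calc
      edist (s (q x)) x ≤ edist (s (q x)) (u (q x)) + edist x (u (q x)) := edist_triangle_right ..
      _ < ε + ε := by
        gcongr
        · simpa only [(hs x).1] using hqu (s (q x))
        · exact hqu x
      _ = 2 * ε := (two_mul ε).symm
    exact (hT_good x hxB ▸ hclose).not_ge hx
  · have hpointwise : ∀ x, h (T x) ≤ h x + (ε + B.indicator (fun _ => h x₀) x) := fun x => by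
      by_cases hxB : x ∈ B
      · rw [hT_bad x hxB, indicator_of_mem hxB]
        exact le_add_left le_add_self
      · simpa [hT_good x hxB, hxB] using (hs x).2
    have hB : MeasurableSet B := hq measurableSet_Ici
    calc ∫⁻ x, h (T x) ∂π ≤ ∫⁻ x, h x + (ε + B.indicator (fun _ => h x₀) x) ∂π :=
          lintegral_mono hpointwise
      _ = ∫⁻ x, h x ∂π + (ε + h x₀ * π B) := by
          rw [lintegral_add_right' h ((measurable_const.indicator hB).const_add ε).aemeasurable,
            lintegral_add_left measurable_const, lintegral_indicator_const hB]
          simp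
      _ ≤ ∫⁻ x, h x ∂π + ε * (1 + h x₀) := by
          rw [mul_add, mul_one, mul_comm ε]
          gcongr

lemma exists_simpleFunc_tendstoInMeasure_id_and_lintegral_le (π : Measure E)
    [IsProbabilityMeasure π] (h : E → ℝ≥0∞) (x₀ : E) :
    ∃ T : ℕ → SimpleFunc E E, TendstoInMeasure π (fun n => T n) atTop id ∧
      ∀ n, ∫⁻ x, h (T n x) ∂π ≤ ∫⁻ x, h x ∂π + (n : ℝ≥0∞)⁻¹ * (1 + h x₀) := by
  choose T hT_dist hT_cost using fun n : ℕ =>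
    exists_simpleFunc_measure_edist_le_and_lintegral_le π h x₀
      (ENNReal.inv_ne_zero.2 (ENNReal.natCast_ne_top n))
  refine ⟨T, fun δ hδ => ?_, hT_cost⟩
  have htwice : Tendsto (fun n : ℕ => 2 * (n : ℝ≥0∞)⁻¹) atTop (𝓝 0) := by
    simpa using ENNReal.Tendsto.const_mul ENNReal.tendsto_inv_nat_nhds_zero
      (Or.inr ENNReal.ofNat_ne_top)
  refine tendsto_of_tendsto_of_tendsto_of_le_of_le' tendsto_const_nhds
    ENNReal.tendsto_inv_nat_nhds_zero (Eventually.of_forall fun _ => zero_le) ?_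
  filter_upwards [htwice.eventually (ge_mem_nhds hδ)] with n hn
  exact (measure_mono fun x hx => hn.trans hx).trans (hT_dist n)

end Approximation

theorem disintegration_inequality_general (d : ℕ)
    (c : EuclideanSpace ℝ (Fin d) → EuclideanSpace ℝ (Fin d) → ℝ≥0∞)
    (W : Measure (EuclideanSpace ℝ (Fin d)) →
         Measure (EuclideanSpace ℝ (Fin d)) → ℝ≥0∞)
    (hconvex : ∀ (a b : ℝ≥0∞)
        (ρ₀ ρ₀' ρ₁ ρ₁' : Measure (EuclideanSpace ℝ (Fin d))), a + b = 1 →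
      W (a • ρ₀ + b • ρ₀') (a • ρ₁ + b • ρ₁') ≤ a * W ρ₀ ρ₁ + b * W ρ₀' ρ₁')
    (hlsc : ∀ (μn νn : ℕ → ProbabilityMeasure (EuclideanSpace ℝ (Fin d)))
        (μ ν : ProbabilityMeasure (EuclideanSpace ℝ (Fin d))),
      Tendsto μn atTop (𝓝 μ) → Tendsto νn atTop (𝓝 ν) →
      W (μ : Measure (EuclideanSpace ℝ (Fin d))) (ν : Measure (EuclideanSpace ℝ (Fin d))) ≤
        Filter.liminf (fun n => W (μn n : Measure (EuclideanSpace ℝ (Fin d)))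
          (νn n : Measure (EuclideanSpace ℝ (Fin d)))) atTop)
    (hdirac : ∀ x y, W (Measure.dirac x) (Measure.dirac y) = c x y)
    (μ ν : ProbabilityMeasure (EuclideanSpace ℝ (Fin d)))
    (π : Measure (EuclideanSpace ℝ (Fin d) × EuclideanSpace ℝ (Fin d)))
    (hπ1 : π.map Prod.fst = (μ : Measure (EuclideanSpace ℝ (Fin d))))
    (hπ2 : π.map Prod.snd = (ν : Measure (EuclideanSpace ℝ (Fin d)))) :
    W (μ : Measure (EuclideanSpace ℝ (Fin d)))
        (ν : Measure (EuclideanSpace ℝ (Fin d))) ≤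
      ∫⁻ p, c p.1 p.2 ∂π := by
  set cost := ∫⁻ p, c p.1 p.2 ∂π
  rcases eq_or_ne cost ⊤ with htop | htop
  · exact htop ▸ le_top
  have : IsProbabilityMeasure π := ⟨by
    simpa [Measure.map_apply measurable_fst MeasurableSet.univ] using congrArg (· univ) hπ1⟩
  obtain ⟨z₀, hz₀⟩ :
      ∃ z : EuclideanSpace ℝ (Fin d) × EuclideanSpace ℝ (Fin d), c z.1 z.2 ≠ ⊤ := by
    by_contra! hinf
    exact htop (by simp [cost, hinf])
  obtain ⟨T, hT_id, hT_cost⟩ :=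
    exists_simpleFunc_tendstoInMeasure_id_and_lintegral_le π (fun p => c p.1 p.2) z₀
  have hT_law := hT_id.tendstoInDistribution fun n => (T n).measurable.aemeasurable
  have hμ := (hT_law.continuous_comp continuous_fst).tendsto
  have hν := (hT_law.continuous_comp continuous_snd).tendsto
  simp only [Function.comp_id, hπ1, hπ2] at hμ hν
  have hbound : ∀ n, W (π.map (Prod.fst ∘ T n)) (π.map (Prod.snd ∘ T n)) ≤
      cost + (n : ℝ≥0∞)⁻¹ * (1 + c z₀.1 z₀.2) := fun n => by
    refine (JointlyConvex.map_simpleFunc_le_lintegral hconvex π (T n) measurable_fst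
      measurable_snd).trans ?_
    simpa only [hdirac] using hT_cost n
  have hlim :
      Tendsto (fun n : ℕ => cost + (n : ℝ≥0∞)⁻¹ * (1 + c z₀.1 z₀.2)) atTop (𝓝 cost) := by
    simpa using tendsto_const_nhds.add (ENNReal.Tendsto.mul_const
      ENNReal.tendsto_inv_nat_nhds_zero (Or.inr (by simpa using hz₀)))
  calc W μ ν ≤ liminf (fun n => W (π.map (Prod.fst ∘ T n)) (π.map (Prod.snd ∘ T n))) atTop :=
        hlsc _ _ μ ν hμ hν
    _ ≤ cost := (liminf_le_liminf (Eventually.of_forall hbound)).trans hlim.liminf_eq.le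

/-- Disintegration inequality: if `W²` is jointly convex, jointly lower
semicontinuous with respect to narrow convergence of probability measures,
and agrees with the lower semicontinuous cost `c` on pairs of Dirac masses,
then `W²(μ,ν) ≤ ∫ c dπ` for every coupling `π` of `μ` and `ν`. -/
theorem disintegration_inequality (d : ℕ)
    (c : EuclideanSpace ℝ (Fin d) → EuclideanSpace ℝ (Fin d) → ℝ≥0∞)
    (hc : LowerSemicontinuous
      (fun p : EuclideanSpace ℝ (Fin d) × EuclideanSpace ℝ (Fin d) => c p.1 p.2))
    (W : Measure (EuclideanSpace ℝ (Fin d)) →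
         Measure (EuclideanSpace ℝ (Fin d)) → ℝ≥0∞)
    (hconvex : ∀ (a b : ℝ≥0∞)
        (ρ₀ ρ₀' ρ₁ ρ₁' : Measure (EuclideanSpace ℝ (Fin d))), a + b = 1 →
      W (a • ρ₀ + b • ρ₀') (a • ρ₁ + b • ρ₁') ≤ a * W ρ₀ ρ₁ + b * W ρ₀' ρ₁')
    (hlsc : ∀ (μn νn : ℕ → ProbabilityMeasure (EuclideanSpace ℝ (Fin d)))
        (μ ν : ProbabilityMeasure (EuclideanSpace ℝ (Fin d))),
      Tendsto μn atTop (𝓝 μ) → Tendsto νn atTop (𝓝 ν) →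
      W (μ : Measure (EuclideanSpace ℝ (Fin d))) (ν : Measure (EuclideanSpace ℝ (Fin d))) ≤
        Filter.liminf (fun n => W (μn n : Measure (EuclideanSpace ℝ (Fin d)))
          (νn n : Measure (EuclideanSpace ℝ (Fin d)))) atTop)
    (hdirac : ∀ x y, W (Measure.dirac x) (Measure.dirac y) = c x y)
    (μ ν : ProbabilityMeasure (EuclideanSpace ℝ (Fin d)))
    (π : Measure (EuclideanSpace ℝ (Fin d) × EuclideanSpace ℝ (Fin d)))
    (hπ1 : π.map Prod.fst = (μ : Measure (EuclideanSpace ℝ (Fin d))))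
    (hπ2 : π.map Prod.snd = (ν : Measure (EuclideanSpace ℝ (Fin d)))) :
    W (μ : Measure (EuclideanSpace ℝ (Fin d)))
        (ν : Measure (EuclideanSpace ℝ (Fin d))) ≤
      ∫⁻ p, c p.1 p.2 ∂π :=
  disintegration_inequality_general d c W hconvex hlsc hdirac μ ν π hπ1 hπ2
end

section
/- Let η : (0,∞) → [0,∞) with finite fourth moment, and let ζ̄_ε be the normalized kernel ζ̄_ε(x) = (d/(ε²M₂(η))) ∫_{|x|}^∞ s η_ε(s) ds (a probability density on ℝ^d). Then for every probability measure μ on ℝ^d with finite second moment, W₂(μ, ζ̄_ε * μ) ≤ ((d/(d+2)) · M₄(η)/M₂(η))^{1/2} · ε. -/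
open MeasureTheory
open scoped ENNReal

noncomputable def W2sq {d : ℕ}
    (μ ν : Measure (EuclideanSpace ℝ (Fin d))) : ℝ≥0∞ :=
  ⨅ (π : Measure (EuclideanSpace ℝ (Fin d) × EuclideanSpace ℝ (Fin d)))
    (_ : π.map Prod.fst = μ) (_ : π.map Prod.snd = ν),
    ∫⁻ p, ENNReal.ofReal (‖p.1 - p.2‖ ^ 2) ∂π

open Set Metric

/-!
Under `μ ⊗ ζ̄_ε` the map `(x, z) ↦ (x, x + z)` couples `μ` with `ζ̄_ε * μ` at transport cost
`∫ ‖z‖² ζ̄_ε(z) dz`. Integrating in polar coordinates and exchanging the order of integration,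
`∫ ‖x‖^j ∫_{‖x‖}^∞ s η_ε(s) ds dx = (d + j)⁻¹ ∫ ‖y‖^(j+2) η_ε(‖y‖) dy`, which is
`ε^(j+2) M_{j+2}(η) / (d + j)` by scaling.
For `j = 0` this says that `ζ̄_ε` is a probability density, and for `j = 2` it evaluates the
cost to `(d / (d + 2)) (M₄(η) / M₂(η)) ε²`.
-/

theorem lintegral_Ioo_pow (n : ℕ) {s : ℝ} (hs : 0 ≤ s) :
    ∫⁻ r in Ioo 0 s, ENNReal.ofReal (r ^ n) = ENNReal.ofReal (s ^ (n + 1) / (n + 1)) := by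
  rw [← ofReal_integral_eq_lintegral_ofReal, ← integral_Ioc_eq_integral_Ioo,
    ← intervalIntegral.integral_of_le hs, integral_pow]
  · simp
  · exact (intervalIntegrable_iff_integrableOn_Ioo_of_le hs).1
      (intervalIntegral.intervalIntegrable_pow n)
  · filter_upwards [ae_restrict_mem measurableSet_Ioo] with r hr using pow_nonneg hr.1.le n

theorem lintegral_Ioi_mul_lintegral_Ioi {F G : ℝ → ℝ≥0∞} (hF : Measurable F)
    (hG : Measurable G) (a : ℝ) :
    ∫⁻ r in Ioi a, F r * ∫⁻ s in Ioi r, G s =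
      ∫⁻ s in Ioi a, (∫⁻ r in Ioo a s, F r) * G s := by
  let K : ℝ → ℝ → ℝ≥0∞ := fun r s => (Ioi a).indicator F r * (Ioi r).indicator G s
  have hK : Measurable (Function.uncurry K) :=
    ((hF.indicator measurableSet_Ioi).comp measurable_fst).mul <|
      (hG.comp measurable_snd).ite (measurableSet_lt measurable_fst measurable_snd)
        measurable_const
  calc ∫⁻ r in Ioi a, F r * ∫⁻ s in Ioi r, G s = ∫⁻ r, ∫⁻ s, K r s := by
        rw [← lintegral_indicator measurableSet_Ioi]
        refine lintegral_congr fun r => ?_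
        rw [lintegral_const_mul _ (hG.indicator measurableSet_Ioi),
          lintegral_indicator measurableSet_Ioi]
        by_cases hr : a < r <;> simp [hr]
    _ = ∫⁻ s, ∫⁻ r, K r s := lintegral_lintegral_swap hK.aemeasurable
    _ = _ := by
        rw [← lintegral_indicator measurableSet_Ioi]
        refine lintegral_congr fun s => ?_
        by_cases hs : a < s
        · rw [indicator_of_mem (mem_Ioi.2 hs), ← lintegral_mul_const _ hF,
            ← lintegral_indicator measurableSet_Ioo]
          congr 1 with r
          by_cases hr : a < r <;> by_cases hrs : r < s <;> simp [K, hr, hrs]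
        · rw [indicator_of_notMem (mt mem_Ioi.1 hs)]
          refine (lintegral_congr fun r => ?_).trans lintegral_zero
          by_cases hr : a < r
          · simp [K, show ¬ r < s by linarith]
          · simp [K, hr]

theorem antitone_lintegral_Ioi (G : ℝ → ℝ≥0∞) : Antitone fun t => ∫⁻ s in Ioi t, G s :=
  fun _ _ hab => lintegral_mono_set (Ioi_subset_Ioi hab)

theorem Antitone.ne_top_of_lintegral_norm_ne_top {F : Type*} [NormedAddCommGroup F]
    [MeasurableSpace F] [OpensMeasurableSpace F] (μ : Measure F) [μ.IsOpenPosMeasure]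
    {Φ : ℝ → ℝ≥0∞} (hΦ : Antitone Φ) (h : ∫⁻ x, Φ ‖x‖ ∂μ ≠ ∞) {t : ℝ} (ht : 0 < t) :
    Φ t ≠ ∞ := by
  have hball : μ (Metric.ball 0 t) * Φ t ≤ ∫⁻ x, Φ ‖x‖ ∂μ :=
    calc μ (Metric.ball 0 t) * Φ t = ∫⁻ _ in Metric.ball 0 t, Φ t ∂μ := by
          rw [setLIntegral_const, mul_comm]
      _ ≤ ∫⁻ x in Metric.ball 0 t, Φ ‖x‖ ∂μ :=
          setLIntegral_mono' measurableSet_ball fun x hx => hΦ (mem_ball_zero_iff.1 hx).le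
      _ ≤ ∫⁻ x, Φ ‖x‖ ∂μ := setLIntegral_le_lintegral _ _
  exact (ENNReal.lt_top_of_mul_ne_top_right (hball.trans_lt h.lt_top).ne
    (measure_ball_pos μ 0 ht).ne').ne

section Radial

variable {E : Type*} [NormedAddCommGroup E] [NormedSpace ℝ E] [FiniteDimensional ℝ E]
  [MeasurableSpace E] [BorelSpace E] (μ : Measure E) [μ.IsAddHaarMeasure]

theorem lintegral_fun_norm_addHaar [Nontrivial E] {f : ℝ → ℝ≥0∞} (hf : Measurable f) :
    ∫⁻ x, f ‖x‖ ∂μ = Module.finrank ℝ E * μ (ball 0 1) *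
      ∫⁻ r in Ioi (0 : ℝ), ENNReal.ofReal (r ^ (Module.finrank ℝ E - 1)) * f r := by
  calc ∫⁻ x, f ‖x‖ ∂μ = ∫⁻ x : ({0}ᶜ : Set E), f ‖x.1‖ ∂(μ.comap (↑)) := by
        rw [lintegral_subtype_comap (measurableSet_singleton _).compl (fun x => f ‖x‖),
          restrict_compl_singleton]
    _ = ∫⁻ p, f p.2 ∂(μ.toSphere.prod (.volumeIoiPow (Module.finrank ℝ E - 1))) := by
        simpa using μ.measurePreserving_homeomorphUnitSphereProd.lintegral_comp_emb
          (Homeomorph.measurableEmbedding _) (f ∘ Subtype.val ∘ Prod.snd)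
    _ = μ.toSphere univ * ∫⁻ r, f r ∂(.volumeIoiPow (Module.finrank ℝ E - 1)) := by
        rw [lintegral_prod _ (by fun_prop)]
        simp [mul_comm]
    _ = _ := by
        rw [Measure.toSphere_apply_univ, Measure.volumeIoiPow,
          lintegral_withDensity_eq_lintegral_mul _ (by fun_prop) (by fun_prop),
          ← lintegral_subtype_comap measurableSet_Ioi]
        rfl

theorem lintegral_comp_smul {f : E → ℝ≥0∞} (hf : Measurable f) {r : ℝ} (hr : r ≠ 0) :
    ∫⁻ x, f (r • x) ∂μ = ENNReal.ofReal |(r ^ Module.finrank ℝ E)⁻¹| * ∫⁻ x, f x ∂μ := by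
  rw [← lintegral_map hf (measurable_const_smul r), Measure.map_addHaar_smul μ hr,
    lintegral_smul_measure, smul_eq_mul]

theorem lintegral_norm_pow_mul_lintegral_Ioi_norm [Nontrivial E] (j : ℕ) {G : ℝ → ℝ≥0∞}
    (hG : Measurable G) :
    ∫⁻ x, ENNReal.ofReal (‖x‖ ^ j) * (∫⁻ s in Ioi ‖x‖, G s) ∂μ =
      ENNReal.ofReal ((Module.finrank ℝ E + j : ℝ)⁻¹) *
        ∫⁻ y, ENNReal.ofReal (‖y‖ ^ (j + 1)) * G ‖y‖ ∂μ := by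
  set d := Module.finrank ℝ E
  have hd : 0 < d := Module.finrank_pos
  have hΦ := (antitone_lintegral_Ioi G).measurable
  rw [lintegral_fun_norm_addHaar μ (f := fun r => ENNReal.ofReal (r ^ j) * ∫⁻ s in Ioi r, G s)
      (by fun_prop),
    lintegral_fun_norm_addHaar μ (f := fun r => ENNReal.ofReal (r ^ (j + 1)) * G r)
      (by fun_prop), mul_left_comm]
  congr 1
  calc ∫⁻ r in Ioi 0,
        ENNReal.ofReal (r ^ (d - 1)) * (ENNReal.ofReal (r ^ j) * ∫⁻ s in Ioi r, G s)
      = ∫⁻ r in Ioi 0, ENNReal.ofReal (r ^ (d - 1 + j)) * ∫⁻ s in Ioi r, G s := by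
        refine setLIntegral_congr_fun measurableSet_Ioi fun r hr => ?_
        rw [← mul_assoc, ← ENNReal.ofReal_mul (pow_nonneg (le_of_lt hr) _), pow_add]
    _ = ∫⁻ s in Ioi 0, (∫⁻ r in Ioo 0 s, ENNReal.ofReal (r ^ (d - 1 + j))) * G s :=
        lintegral_Ioi_mul_lintegral_Ioi (by fun_prop) hG 0
    _ = _ := by
        rw [← lintegral_const_mul _ (by fun_prop)]
        refine setLIntegral_congr_fun measurableSet_Ioi fun s hs => ?_
        have hs : 0 < s := hs
        rw [lintegral_Ioo_pow _ hs.le, ← mul_assoc, ← mul_assoc,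
          ← ENNReal.ofReal_mul (by positivity), ← ENNReal.ofReal_mul (by positivity),
          show d - 1 + j + 1 = d + j by omega]
        congr 1
        rw [mul_assoc, ← pow_add, show d - 1 + (j + 1) = d + j by omega, div_eq_inv_mul,
          ← Nat.cast_add_one, show d - 1 + j + 1 = d + j by omega, Nat.cast_add]

theorem lintegral_norm_pow_mul_lintegral_Ioi_rescale [Nontrivial E] (j : ℕ) {η : ℝ → ℝ}
    (hη : Measurable η) {ε : ℝ} (hε : 0 < ε) :
    ∫⁻ x, ENNReal.ofReal (‖x‖ ^ j) *
        (∫⁻ s in Ioi ‖x‖, ENNReal.ofReal (s * (ε ^ (-(Module.finrank ℝ E : ℤ)) * η (s / ε))))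
        ∂μ =
      ENNReal.ofReal (ε ^ (j + 2) / (Module.finrank ℝ E + j)) *
        ∫⁻ y, ENNReal.ofReal (‖y‖ ^ (j + 2) * η ‖y‖) ∂μ := by
  set d := Module.finrank ℝ E
  have hscale : ∀ y : E, ENNReal.ofReal (‖y‖ ^ (j + 1)) *
      ENNReal.ofReal (‖y‖ * (ε ^ (-(d : ℤ)) * η (‖y‖ / ε))) =
      ENNReal.ofReal (ε ^ (j + 2) * ε ^ (-(d : ℤ))) *
        ENNReal.ofReal (‖ε⁻¹ • y‖ ^ (j + 2) * η ‖ε⁻¹ • y‖) := by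
    intro y
    rw [← ENNReal.ofReal_mul (by positivity), ← ENNReal.ofReal_mul (by positivity),
      norm_smul, norm_inv, Real.norm_of_nonneg hε.le, ← div_eq_inv_mul]
    congr 1
    rw [div_pow]
    field_simp
    ring
  rw [lintegral_norm_pow_mul_lintegral_Ioi_norm μ j (by fun_prop), lintegral_congr hscale,
    lintegral_const_mul _ (by fun_prop),
    lintegral_comp_smul μ (f := fun y => ENNReal.ofReal (‖y‖ ^ (j + 2) * η ‖y‖)) (by fun_prop)
      (inv_ne_zero hε.ne'), ← mul_assoc, ← mul_assoc, ← ENNReal.ofReal_mul (by positivity),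
    ← ENNReal.ofReal_mul (by positivity)]
  congr 2
  rw [inv_pow, inv_inv, abs_of_pos (by positivity), zpow_neg, zpow_natCast]
  field_simp
  rfl

end Radial

section Convolution

variable {G : Type*} [AddCommGroup G] [MeasurableSpace G] [MeasurableAdd₂ G] [MeasurableNeg G]
  (μ ν : Measure G) [SFinite μ] [SFinite ν] [ν.IsAddRightInvariant]

theorem conv_withDensity {f : G → ℝ≥0∞} (hf : Measurable f) :
    μ ∗ ν.withDensity f = ν.withDensity fun x => ∫⁻ y, f (x - y) ∂μ := by
  have hfsub : Measurable fun p : G × G => f (p.1 - p.2) := by fun_prop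
  refine Measure.ext_of_lintegral _ fun φ hφ => ?_
  calc ∫⁻ x, φ x ∂(μ ∗ ν.withDensity f)
      = ∫⁻ y, ∫⁻ z, f z * φ (y + z) ∂ν ∂μ := by
        rw [Measure.lintegral_conv hφ]
        refine lintegral_congr fun y => ?_
        exact lintegral_withDensity_eq_lintegral_mul _ hf (by fun_prop)
    _ = ∫⁻ y, ∫⁻ x, f (x - y) * φ x ∂ν ∂μ := by
        refine lintegral_congr fun y => ?_
        rw [← lintegral_sub_right_eq_self (fun z => f z * φ (y + z)) y]
        simp only [add_sub_cancel]
    _ = ∫⁻ x, (∫⁻ y, f (x - y) ∂μ) * φ x ∂ν := by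
        rw [lintegral_lintegral_swap (by fun_prop)]
        refine lintegral_congr fun x => ?_
        exact lintegral_mul_const _ (by fun_prop)
    _ = ∫⁻ x, φ x ∂(ν.withDensity fun x => ∫⁻ y, f (x - y) ∂μ) :=
        (lintegral_withDensity_eq_lintegral_mul _ hfsub.lintegral_prod_right' hφ).symm

theorem conv_withDensity_ofReal [IsFiniteMeasure μ] {f : G → ℝ} (hf : Measurable f)
    (hf₀ : 0 ≤ f) (hfin : ∫⁻ x, ENNReal.ofReal (f x) ∂ν ≠ ∞) :
    μ ∗ ν.withDensity (fun x => ENNReal.ofReal (f x)) =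
      ν.withDensity fun x => ENNReal.ofReal (∫ y, f (x - y) ∂μ) := by
  rw [conv_withDensity μ ν (by fun_prop)]
  refine withDensity_congr_ae ?_
  have htotal : ∫⁻ x, ∫⁻ y, ENNReal.ofReal (f (x - y)) ∂μ ∂ν ≠ ∞ := by
    rw [lintegral_lintegral_swap (by fun_prop)]
    simp only [lintegral_sub_right_eq_self (fun x => ENNReal.ofReal (f x)), lintegral_const]
    exact ENNReal.mul_ne_top hfin (measure_ne_top μ univ)
  filter_upwards [ae_lt_top (by fun_prop) htotal] with x hx
  have hpos : 0 ≤ᵐ[μ] fun y => f (x - y) := .of_forall fun y => hf₀ (x - y)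
  exact (ofReal_integral_eq_lintegral_ofReal
    ⟨(by fun_prop : Measurable fun y => f (x - y)).aestronglyMeasurable,
      (hasFiniteIntegral_iff_ofReal hpos).2 hx⟩ hpos).symm

end Convolution

theorem W2sq_conv_le {d : ℕ} (μ ν : Measure (EuclideanSpace ℝ (Fin d)))
    [IsProbabilityMeasure μ] [IsProbabilityMeasure ν] :
    W2sq μ (μ ∗ ν) ≤ ∫⁻ z, ENNReal.ofReal (‖z‖ ^ 2) ∂ν := by
  let T : _ × _ → _ × _ := fun p : EuclideanSpace ℝ (Fin d) × _ => (p.1, p.1 + p.2)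
  have hT : Measurable T := by fun_prop
  let π := (μ.prod ν).map T
  have hfst : π.map Prod.fst = μ := by
    rw [Measure.map_map measurable_fst hT]
    exact (Measure.map_fst_prod).trans (by rw [measure_univ, one_smul])
  have hsnd : π.map Prod.snd = μ ∗ ν := Measure.map_map measurable_snd hT
  have hcost :
      ∫⁻ p, ENNReal.ofReal (‖p.1 - p.2‖ ^ 2) ∂π = ∫⁻ z, ENNReal.ofReal (‖z‖ ^ 2) ∂ν := by
    rw [lintegral_map (by fun_prop) hT, lintegral_prod _ (by fun_prop)]
    simp [T, lintegral_const]
  exact iInf₂_le_of_le π hfst (iInf_le_of_le hsnd hcost.le)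

theorem norm_pow_mul_nonneg {E : Type*} [SeminormedAddCommGroup E] {η : ℝ → ℝ}
    (hη₀ : ∀ r, 0 < r → 0 ≤ η r) {k : ℕ} (hk : k ≠ 0) (y : E) : 0 ≤ ‖y‖ ^ k * η ‖y‖ := by
  rcases (norm_nonneg y).eq_or_lt with hy | hy
  · simp [← hy, hk]
  · exact mul_nonneg (by positivity) (hη₀ _ hy)

section ZetaBar

variable {E : Type*} [NormedAddCommGroup E] [NormedSpace ℝ E] [MeasurableSpace E]

noncomputable def zetaBar (μ : Measure E) (η : ℝ → ℝ) (ε : ℝ) (x : E) : ℝ :=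
  Module.finrank ℝ E / (ε ^ 2 * ∫ y, ‖y‖ ^ 2 * η ‖y‖ ∂μ) *
    ∫ s in Ioi ‖x‖, s * (ε ^ (-(Module.finrank ℝ E : ℤ)) * η (s / ε))

variable (μ : Measure E)

theorem zetaBar_nonneg {η : ℝ → ℝ} (hη₀ : ∀ r, 0 < r → 0 ≤ η r) {ε : ℝ} (hε : 0 < ε)
    (x : E) : 0 ≤ zetaBar μ η ε x := by
  have hM₂ : 0 ≤ ∫ y, ‖y‖ ^ 2 * η ‖y‖ ∂μ :=
    integral_nonneg (norm_pow_mul_nonneg hη₀ two_ne_zero)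
  refine mul_nonneg (by positivity) (setIntegral_nonneg measurableSet_Ioi fun s hs => ?_)
  have hs : 0 < s := (norm_nonneg x).trans_lt hs
  exact mul_nonneg hs.le (mul_nonneg (by positivity) (hη₀ _ (div_pos hs hε)))

theorem measurable_zetaBar [OpensMeasurableSpace E] {η : ℝ → ℝ} (hη : Measurable η)
    (ε : ℝ) : Measurable (zetaBar μ η ε) := by
  have htail : Measurable fun t : ℝ =>
      ∫ s in Ioi t, s * (ε ^ (-(Module.finrank ℝ E : ℤ)) * η (s / ε)) := by
    have := StronglyMeasurable.integral_prod_right (ν := volume)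
      (f := fun t s => (Ioi t).indicator
        (fun s => s * (ε ^ (-(Module.finrank ℝ E : ℤ)) * η (s / ε))) s) ?_
    · simpa only [integral_indicator measurableSet_Ioi] using this.measurable
    · exact (Measurable.ite (measurableSet_lt measurable_fst measurable_snd)
        (by fun_prop) measurable_const).stronglyMeasurable
  exact measurable_const.mul (htail.comp measurable_norm)

variable [BorelSpace E] [FiniteDimensional ℝ E] [Nontrivial E] [μ.IsAddHaarMeasure]

theorem lintegral_norm_pow_mul_zetaBar (j : ℕ) {η : ℝ → ℝ} (hη : Measurable η)
    (hη₀ : ∀ r, 0 < r → 0 ≤ η r) {ε : ℝ} (hε : 0 < ε)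
    (hM₂ : Integrable (fun y => ‖y‖ ^ 2 * η ‖y‖) μ)
    (hM : Integrable (fun y => ‖y‖ ^ (j + 2) * η ‖y‖) μ) :
    ∫⁻ x, ENNReal.ofReal (‖x‖ ^ j) * ENNReal.ofReal (zetaBar μ η ε x) ∂μ =
      ENNReal.ofReal (Module.finrank ℝ E / (ε ^ 2 * ∫ y, ‖y‖ ^ 2 * η ‖y‖ ∂μ) *
        (ε ^ (j + 2) / (Module.finrank ℝ E + j) * ∫ y, ‖y‖ ^ (j + 2) * η ‖y‖ ∂μ)) := by
  set d := Module.finrank ℝ E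
  set h : ℝ → ℝ := fun s => s * (ε ^ (-(d : ℤ)) * η (s / ε))
  have hh₀ : ∀ s, 0 < s → 0 ≤ h s := fun s hs =>
    mul_nonneg hs.le (mul_nonneg (by positivity) (hη₀ _ (div_pos hs hε)))
  have hfin : ∫⁻ x, (∫⁻ s in Ioi ‖x‖, ENNReal.ofReal (h s)) ∂μ ≠ ∞ := by
    have := lintegral_norm_pow_mul_lintegral_Ioi_rescale μ 0 hη hε
    simp only [pow_zero, ENNReal.ofReal_one, one_mul, zero_add] at this
    rw [this]
    exact ENNReal.mul_ne_top ENNReal.ofReal_ne_top hM₂.lintegral_lt_top.ne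
  -- The Bochner integral in `zetaBar` may be junk at `x = 0`; for `t > 0` the tail is finite
  -- because its radial integral is.
  have htail : ∀ t, 0 < t →
      ENNReal.ofReal (∫ s in Ioi t, h s) = ∫⁻ s in Ioi t, ENNReal.ofReal (h s) := by
    intro t ht
    have hpos : 0 ≤ᵐ[volume.restrict (Ioi t)] h := by
      filter_upwards [ae_restrict_mem measurableSet_Ioi] with s hs using hh₀ s (ht.trans hs)
    have hlt := (antitone_lintegral_Ioi _).ne_top_of_lintegral_norm_ne_top μ hfin ht
    exact ofReal_integral_eq_lintegral_ofReal
      ⟨(by fun_prop : Measurable h).aestronglyMeasurable,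
        (hasFiniteIntegral_iff_ofReal hpos).2 hlt.lt_top⟩ hpos
  have hc : 0 ≤ d / (ε ^ 2 * ∫ y, ‖y‖ ^ 2 * η ‖y‖ ∂μ) :=
    div_nonneg (by positivity) (mul_nonneg (by positivity)
      (integral_nonneg (norm_pow_mul_nonneg hη₀ two_ne_zero)))
  calc ∫⁻ x, ENNReal.ofReal (‖x‖ ^ j) * ENNReal.ofReal (zetaBar μ η ε x) ∂μ
      = ∫⁻ x, ENNReal.ofReal (d / (ε ^ 2 * ∫ y, ‖y‖ ^ 2 * η ‖y‖ ∂μ)) *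
          (ENNReal.ofReal (‖x‖ ^ j) * ∫⁻ s in Ioi ‖x‖, ENNReal.ofReal (h s)) ∂μ := by
        refine lintegral_congr_ae ?_
        filter_upwards [compl_mem_ae_iff.2 (measure_singleton (0 : E))] with x hx
        rw [zetaBar, ENNReal.ofReal_mul hc, htail _ (norm_pos_iff.2 hx), mul_left_comm]
    _ = _ := by
        rw [lintegral_const_mul' _ _ ENNReal.ofReal_ne_top,
          lintegral_norm_pow_mul_lintegral_Ioi_rescale μ j hη hε,
          ← ofReal_integral_eq_lintegral_ofReal hM
            (.of_forall (norm_pow_mul_nonneg hη₀ (by omega))),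
          ← ENNReal.ofReal_mul (by positivity), ← ENNReal.ofReal_mul hc]

theorem lintegral_ofReal_zetaBar {η : ℝ → ℝ} (hη : Measurable η) (hη₀ : ∀ r, 0 < r → 0 ≤ η r)
    {ε : ℝ} (hε : 0 < ε) (hM₂ : Integrable (fun y => ‖y‖ ^ 2 * η ‖y‖) μ)
    (hM₂pos : 0 < ∫ y, ‖y‖ ^ 2 * η ‖y‖ ∂μ) :
    ∫⁻ x, ENNReal.ofReal (zetaBar μ η ε x) ∂μ = 1 := by
  have hd : (Module.finrank ℝ E : ℝ) ≠ 0 := Nat.cast_ne_zero.2 Module.finrank_pos.ne'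
  have := lintegral_norm_pow_mul_zetaBar μ 0 hη hη₀ hε hM₂ hM₂
  simp only [pow_zero, ENNReal.ofReal_one, one_mul, zero_add, Nat.cast_zero, add_zero] at this
  rw [this, ← ENNReal.ofReal_one]
  congr 1
  field_simp

theorem lintegral_norm_sq_withDensity_zetaBar {η : ℝ → ℝ} (hη : Measurable η)
    (hη₀ : ∀ r, 0 < r → 0 ≤ η r) {ε : ℝ} (hε : 0 < ε)
    (hM₂ : Integrable (fun y => ‖y‖ ^ 2 * η ‖y‖) μ)
    (hM₄ : Integrable (fun y => ‖y‖ ^ 4 * η ‖y‖) μ) :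
    ∫⁻ x, ENNReal.ofReal (‖x‖ ^ 2)
        ∂(μ.withDensity fun x => ENNReal.ofReal (zetaBar μ η ε x)) =
      ENNReal.ofReal (Module.finrank ℝ E / (Module.finrank ℝ E + 2) *
        ((∫ y, ‖y‖ ^ 4 * η ‖y‖ ∂μ) / ∫ y, ‖y‖ ^ 2 * η ‖y‖ ∂μ) * ε ^ 2) := by
  rw [lintegral_withDensity_eq_lintegral_mul _ (measurable_zetaBar μ hη ε).ennreal_ofReal
    (by fun_prop)]
  simp only [Pi.mul_apply, mul_comm (ENNReal.ofReal (zetaBar μ η ε _))]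
  rw [lintegral_norm_pow_mul_zetaBar μ 2 hη hη₀ hε hM₂ hM₄]
  congr 1
  have : ε ≠ 0 := hε.ne'
  simp only [div_eq_mul_inv, mul_inv]
  field_simp
  push_cast
  ring

end ZetaBar

theorem wasserstein_zeta_convolution_estimate_general (d : ℕ) (hd : 0 < d)
    (η : ℝ → ℝ) (hη : Measurable η) (hnonneg : ∀ r : ℝ, 0 < r → 0 ≤ η r)
    (hM2 : Integrable (fun y : EuclideanSpace ℝ (Fin d) => ‖y‖ ^ 2 * η ‖y‖))
    (hM2pos : 0 < ∫ y : EuclideanSpace ℝ (Fin d), ‖y‖ ^ 2 * η ‖y‖)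
    (hM4 : Integrable (fun y : EuclideanSpace ℝ (Fin d) => ‖y‖ ^ 4 * η ‖y‖))
    (ε : ℝ) (hε : 0 < ε)
    (ζε : EuclideanSpace ℝ (Fin d) → ℝ)
    (hζ : ∀ x, ζε x =
      ((d : ℝ) / (ε ^ 2 * ∫ y : EuclideanSpace ℝ (Fin d), ‖y‖ ^ 2 * η ‖y‖)) *
        ∫ s in Set.Ioi ‖x‖, s * (ε ^ (-(d : ℤ)) * η (s / ε)))
    (μ : Measure (EuclideanSpace ℝ (Fin d))) [IsProbabilityMeasure μ] :
    W2sq μ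
      ((volume : Measure (EuclideanSpace ℝ (Fin d))).withDensity
        (fun x => ENNReal.ofReal (∫ y, ζε (x - y) ∂μ))) ≤
      ENNReal.ofReal (((d : ℝ) / (d + 2)) *
        ((∫ y : EuclideanSpace ℝ (Fin d), ‖y‖ ^ 4 * η ‖y‖) /
          (∫ y : EuclideanSpace ℝ (Fin d), ‖y‖ ^ 2 * η ‖y‖)) * ε ^ 2) := by
  have : Nontrivial (EuclideanSpace ℝ (Fin d)) :=
    Module.nontrivial_of_finrank_pos (by rwa [finrank_euclideanSpace_fin])
  obtain rfl : ζε = zetaBar volume η ε :=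
    funext fun x => by rw [hζ, zetaBar, finrank_euclideanSpace_fin]
  have hmass := lintegral_ofReal_zetaBar volume hη hnonneg hε hM2 hM2pos
  have : IsProbabilityMeasure
      (volume.withDensity fun x => ENNReal.ofReal (zetaBar volume η ε x)) :=
    ⟨by rw [withDensity_apply _ .univ, Measure.restrict_univ, hmass]⟩
  rw [← conv_withDensity_ofReal μ volume (measurable_zetaBar volume hη ε)
    (zetaBar_nonneg volume hnonneg hε) (hmass ▸ ENNReal.one_ne_top)]
  refine (W2sq_conv_le μ _).trans_eq ?_
  rw [lintegral_norm_sq_withDensity_zetaBar volume hη hnonneg hε hM2 hM4,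
    finrank_euclideanSpace_fin]

/-- `W₂(μ, ζ̄_ε * μ) ≤ ((d/(d+2)) M₄(η)/M₂(η))^{1/2} ε` for the normalized
kernel `ζ̄_ε(x) = (d/(ε² M₂(η))) ∫_{|x|}^∞ s η_ε(s) ds`, stated in the
equivalent squared form. -/
theorem wasserstein_zeta_convolution_estimate (d : ℕ) (hd : 0 < d)
    (η : ℝ → ℝ) (hη : Measurable η) (hnonneg : ∀ r : ℝ, 0 < r → 0 ≤ η r)
    (htail : Integrable
      (fun y : EuclideanSpace ℝ (Fin d) => min 1 (‖y‖ ^ 2) * η ‖y‖))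
    (hM2 : Integrable (fun y : EuclideanSpace ℝ (Fin d) => ‖y‖ ^ 2 * η ‖y‖))
    (hM2pos : 0 < ∫ y : EuclideanSpace ℝ (Fin d), ‖y‖ ^ 2 * η ‖y‖)
    (hM4 : Integrable (fun y : EuclideanSpace ℝ (Fin d) => ‖y‖ ^ 4 * η ‖y‖))
    (ε : ℝ) (hε : 0 < ε)
    (ζε : EuclideanSpace ℝ (Fin d) → ℝ)
    (hζ : ∀ x, ζε x =
      ((d : ℝ) / (ε ^ 2 * ∫ y : EuclideanSpace ℝ (Fin d), ‖y‖ ^ 2 * η ‖y‖)) *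
        ∫ s in Set.Ioi ‖x‖, s * (ε ^ (-(d : ℤ)) * η (s / ε)))
    (μ : Measure (EuclideanSpace ℝ (Fin d))) [IsProbabilityMeasure μ]
    (hμ2 : Integrable (fun x : EuclideanSpace ℝ (Fin d) => ‖x‖ ^ 2) μ) :
    W2sq μ
      ((volume : Measure (EuclideanSpace ℝ (Fin d))).withDensity
        (fun x => ENNReal.ofReal (∫ y, ζε (x - y) ∂μ))) ≤
      ENNReal.ofReal (((d : ℝ) / (d + 2)) *
        ((∫ y : EuclideanSpace ℝ (Fin d), ‖y‖ ^ 4 * η ‖y‖) /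
          (∫ y : EuclideanSpace ℝ (Fin d), ‖y‖ ^ 2 * η ‖y‖)) * ε ^ 2) :=
  wasserstein_zeta_convolution_estimate_general d hd η hη hnonneg hM2 hM2pos hM4 ε hε ζε hζ μ
end
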